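/- Let A be an abelian category and (C, D) a cotorsion pair. For a complex X with all components in C, X belongs to dg-C̃ (the left Ext^1-orthogonal of D̃ in Ch(A)) if and only if every chain map from X to a complex in D̃ is nullhomotopic. -/

import Mathlib

open CategoryTheory Category Limits

/-- `Ext1Zero Z X` expresses the vanishing of `Ext¹(Z, X)` in an abelian category:
every short exact sequence `0 → X → E → Z → 0` splits. -/
def Ext1Zero {C : Type*} [Category C] [Abelian C] (Z X : C) : Prop :=
  ∀ ⦃E : C⦄ (i : X ⟶ E) (p : E ⟶ Z) (w : i ≫ p = 0),
    (ShortComplex.mk i p w).ShortExact → ∃ r : E ⟶ X, i ≫ r = 𝟙 X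

/-- `(𝒞, 𝒟)` is a cotorsion pair: each class is the `Ext¹`-orthogonal of the other. -/
def IsCotorsionPair {C : Type*} [Category C] [Abelian C] (𝒞 𝒟 : Set C) : Prop :=
  (∀ X, X ∈ 𝒞 ↔ ∀ Y ∈ 𝒟, Ext1Zero X Y) ∧ (∀ Y, Y ∈ 𝒟 ↔ ∀ X ∈ 𝒞, Ext1Zero X Y)

section Helpers

variable {A : Type*} [Category A] [Abelian A]

lemma ext1Zero_of_iso {Z Y Y' : A} (e : Y ≅ Y') (h : Ext1Zero Z Y) : Ext1Zero Z Y' := by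
  intro E i p w hS
  have w₂ : (e.hom ≫ i) ≫ p = 0 := by rw [assoc, w, comp_zero]
  have eS : ShortComplex.mk i p w ≅ ShortComplex.mk (e.hom ≫ i) p w₂ :=
    ShortComplex.isoMk e.symm (Iso.refl _) (Iso.refl _) (by dsimp; simp) (by dsimp; simp)
  obtain ⟨r₂, hr₂⟩ := h _ _ w₂ (ShortComplex.shortExact_of_iso eS hS)
  refine ⟨r₂ ≫ e.hom, ?_⟩
  have h1 : i ≫ r₂ = e.inv := by
    rw [← cancel_epi e.hom, ← assoc, hr₂, e.hom_inv_id]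
  rw [← assoc, h1, e.inv_hom_id]

attribute [local instance] CategoryTheory.Abelian.Pseudoelement.objectToSort
  CategoryTheory.Abelian.Pseudoelement.homToFun

open CategoryTheory.Abelian

/-- `Ext1Zero Z -` is closed under extensions. -/
lemma ext1Zero_of_extension {Z D₁ W D₂ : A} (j : D₁ ⟶ W) (q : W ⟶ D₂) (wS : j ≫ q = 0)
    (hS : (ShortComplex.mk j q wS).ShortExact)
    (h₁ : Ext1Zero Z D₁) (h₂ : Ext1Zero Z D₂) : Ext1Zero Z W := by
  intro E i p w hSE
  haveI := hSE.mono_f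
  haveI := hSE.epi_g
  haveI := hS.mono_f
  haveI := hS.epi_g
  -- the quotient Q = E / D₁
  set c : E ⟶ cokernel (j ≫ i) := cokernel.π (j ≫ i) with hc
  have hjic : (j ≫ i) ≫ c = 0 := cokernel.condition _
  -- the map D₂ ⟶ Q
  obtain ⟨ibar, hibar⟩ := CokernelCofork.IsColimit.desc'
    (hS.gIsCokernel) (i ≫ c) (by rw [← assoc]; exact hjic)
  have hibar : q ≫ ibar = i ≫ c := hibar
  set pbar : cokernel (j ≫ i) ⟶ Z := cokernel.desc (j ≫ i) p (by rw [assoc, w, comp_zero])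
    with hpbar
  have hcpbar : c ≫ pbar = p := cokernel.π_desc _ _ _
  have wQ : ibar ≫ pbar = 0 := by
    rw [← cancel_epi q, ← assoc, hibar, assoc, hcpbar, w, comp_zero]
  haveI hepi_pbar : Epi pbar := epi_of_epi_fac hcpbar
  have hexact_jic : (ShortComplex.mk (j ≫ i) c hjic).Exact :=
    ShortComplex.exact_of_g_is_cokernel _ (cokernelIsCokernel _)
  haveI hmono_ibar : Mono ibar := by
    apply Pseudoelement.mono_of_zero_of_map_zero
    intro a ha
    obtain ⟨b, rfl⟩ := Pseudoelement.pseudo_surjective_of_epi q a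
    have hib : c (i b) = 0 := by
      rw [← Pseudoelement.comp_apply, ← hibar, Pseudoelement.comp_apply, ha]
    obtain ⟨d, hd⟩ := Pseudoelement.pseudo_exact_of_exact hexact_jic _ hib
    have hd' : i (j d) = i b := by rw [← Pseudoelement.comp_apply]; exact hd
    have hjd : j d = b := Pseudoelement.pseudo_injective_of_mono i hd'
    rw [← hjd, ← Pseudoelement.comp_apply, wS]
    exact Pseudoelement.zero_apply _ _
  have hQcoker : IsColimit (CokernelCofork.ofπ pbar wQ) := by
    refine CokernelCofork.IsColimit.ofπ' pbar wQ (fun {T} u hu => ?_)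
    have hicu : i ≫ c ≫ u = 0 := by
      rw [← assoc, ← hibar, assoc, hu, comp_zero]
    obtain ⟨v, hv⟩ := CokernelCofork.IsColimit.desc' hSE.gIsCokernel (c ≫ u) hicu
    refine ⟨v, ?_⟩
    rw [← cancel_epi c, ← assoc, hcpbar]
    exact hv
  have hSQ : (ShortComplex.mk ibar pbar wQ).ShortExact :=
    { exact := ShortComplex.exact_of_g_is_cokernel _ hQcoker
      mono_f := hmono_ibar
      epi_g := hepi_pbar }
  obtain ⟨r₂, hr₂⟩ := h₂ ibar pbar wQ hSQ
  -- a section of pbar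
  set spl₂ := ShortComplex.Splitting.ofExactOfRetraction _ hSQ.exact r₂ hr₂ hSQ.epi_g with hspl₂
  set s₂ : Z ⟶ cokernel (j ≫ i) := spl₂.s with hs₂def
  have hs₂ : s₂ ≫ pbar = 𝟙 Z := spl₂.s_g
  -- E₁ = pullback of s₂ and c
  haveI : Epi c := coequalizer.π_epi
  haveI : Epi (pullback.fst s₂ c) := Abelian.epi_pullback_of_epi_g _ _
  have hκw : (0 : D₁ ⟶ Z) ≫ s₂ = (j ≫ i) ≫ c := by rw [zero_comp, hjic]
  set κ : D₁ ⟶ pullback s₂ c := pullback.lift 0 (j ≫ i) hκw with hκ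
  have hκfst : κ ≫ pullback.fst s₂ c = 0 := pullback.lift_fst _ _ _
  have hκsnd : κ ≫ pullback.snd s₂ c = j ≫ i := pullback.lift_snd _ _ _
  haveI : Mono (j ≫ i) := mono_comp _ _
  haveI hκmono : Mono κ := mono_of_mono_fac hκsnd
  -- j ≫ i is the kernel of c
  have hkerc := Abelian.monoIsKernelOfCokernel (CokernelCofork.ofπ c hjic)
    (cokernelIsCokernel (j ≫ i))
  have hkerE₁ : IsLimit (KernelFork.ofι κ hκfst) := by
    refine KernelFork.IsLimit.ofι' κ hκfst (fun {T} u hu => ?_)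
    have husnd : (u ≫ pullback.snd s₂ c) ≫ c = 0 := by
      rw [assoc, ← pullback.condition, ← assoc, hu, zero_comp]
    obtain ⟨v, hv⟩ := KernelFork.IsLimit.lift' hkerc _ husnd
    refine ⟨v, ?_⟩
    apply pullback.hom_ext
    · rw [assoc, hκfst, comp_zero, hu]
    · rw [assoc, hκsnd]; exact hv
  have wE₁ : κ ≫ pullback.fst s₂ c = 0 := hκfst
  have hSE₁ : (ShortComplex.mk κ (pullback.fst s₂ c) wE₁).ShortExact :=
    { exact := ShortComplex.exact_of_f_is_kernel _ hkerE₁ }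
  obtain ⟨ρ, hρ⟩ := h₁ κ (pullback.fst s₂ c) wE₁ hSE₁
  set spl₁ := ShortComplex.Splitting.ofExactOfRetraction _ hSE₁.exact ρ hρ hSE₁.epi_g with hspl₁
  set s₁ : Z ⟶ pullback s₂ c := spl₁.s with hs₁def
  have hs₁ : s₁ ≫ pullback.fst s₂ c = 𝟙 Z := spl₁.s_g
  -- the section of p
  have hsndp : pullback.snd s₂ c ≫ p = pullback.fst s₂ c := by
    rw [← hcpbar, ← assoc, ← pullback.condition, assoc, hs₂, comp_id]
  have hsp : (s₁ ≫ pullback.snd s₂ c) ≫ p = 𝟙 Z := by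
    rw [assoc, hsndp]; exact hs₁
  set spl := ShortComplex.Splitting.ofExactOfSection _ hSE.exact
    (s₁ ≫ pullback.snd s₂ c) hsp hSE.mono_f with hspl
  exact ⟨spl.r, spl.f_r⟩

end Helpers

section ComplexHelpers

variable {A : Type*} [Category A] [Abelian A]

open HomologicalComplex

lemma mem_D_of_iso {𝒞 𝒟 : Set A} (hpair : IsCotorsionPair 𝒞 𝒟) {Y Y' : A} (e : Y ≅ Y')
    (hY : Y ∈ 𝒟) : Y' ∈ 𝒟 :=
  (hpair.2 Y').2 (fun X₀ hX₀ => ext1Zero_of_iso e ((hpair.2 Y).1 hY X₀ hX₀))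

lemma epi_toCycles_of_exactAt (Y : CochainComplex A ℤ) (n : ℤ) (hY : Y.ExactAt (n + 1)) :
    Epi (Y.toCycles n (n + 1)) := by
  rw [Y.exactAt_iff' n (n + 1) (n + 1 + 1)
    ((ComplexShape.up ℤ).prev_eq' (by simp))
    ((ComplexShape.up ℤ).next_eq' (by simp))] at hY
  have h1 : Epi (Y.sc' n (n + 1) (n + 1 + 1)).toCycles := hY.epi_toCycles
  have h2 := Y.toCycles_cyclesIsoSc'_hom n (n + 1) (n + 1 + 1)
    ((ComplexShape.up ℤ).prev_eq' (by simp))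
    ((ComplexShape.up ℤ).next_eq' (by simp))
  have h3 : Y.toCycles n (n + 1) = (Y.sc' n (n + 1) (n + 1 + 1)).toCycles ≫
      (Y.cyclesIsoSc' n (n + 1) (n + 1 + 1)
        ((ComplexShape.up ℤ).prev_eq' (by simp))
        ((ComplexShape.up ℤ).next_eq' (by simp))).inv := by
    exact (Iso.eq_comp_inv _).2 h2
  rw [h3]
  exact @epi_comp _ _ _ _ _ _ h1 _ _

lemma cycles_shortExact (Y : CochainComplex A ℤ) (n : ℤ) (hY : Y.ExactAt (n + 1)) :
    (ShortComplex.mk (Y.iCycles n) (Y.toCycles n (n + 1))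
      (by rw [← cancel_mono (Y.iCycles (n + 1)), assoc, toCycles_i, zero_comp, iCycles_d])
      ).ShortExact := by
  refine { exact := ?_, mono_f := inferInstance, epi_g := epi_toCycles_of_exactAt Y n hY }
  apply ShortComplex.exact_of_f_is_kernel
  refine KernelFork.IsLimit.ofι' _ _ (fun {T} u hu => ?_)
  have hud : u ≫ Y.d n (n + 1) = 0 := by
    have h0 : u ≫ Y.toCycles n (n + 1) = 0 := hu
    have h1 := h0 =≫ Y.iCycles (n + 1)
    simpa only [assoc, toCycles_i, zero_comp] using h1
  exact ⟨Y.liftCycles u (n + 1) ((ComplexShape.up ℤ).next_eq' (by simp)) hud,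
    Y.liftCycles_i _ _ _ _⟩

lemma X_mem_D {𝒞 𝒟 : Set A} (hpair : IsCotorsionPair 𝒞 𝒟) (Y : CochainComplex A ℤ)
    (hY1 : ∀ n, Y.ExactAt n) (hY2 : ∀ n, Y.cycles n ∈ 𝒟) (n : ℤ) : Y.X n ∈ 𝒟 := by
  refine (hpair.2 _).2 (fun X₀ hX₀ => ?_)
  exact ext1Zero_of_extension _ _ _ (cycles_shortExact Y n (hY1 (n + 1)))
    ((hpair.1 X₀).1 hX₀ _ (hY2 n)) ((hpair.1 X₀).1 hX₀ _ (hY2 (n + 1)))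

lemma shift_exactAt (Y : CochainComplex A ℤ) (k n : ℤ) (hY : Y.ExactAt (n + k)) :
    ((Y⟦k⟧ : CochainComplex A ℤ)).ExactAt n := by
  rw [HomologicalComplex.exactAt_iff_isZero_homology] at hY ⊢
  exact IsZero.of_iso hY
    (((HomologicalComplex.homologyFunctor A (ComplexShape.up ℤ) 0).shiftIso
      k n (n + k) (add_comm k n)).app Y)

set_option maxHeartbeats 1000000 in
/-- cycles of a shifted complex -/
noncomputable def shiftCyclesIso (Y : CochainComplex A ℤ) (k n : ℤ) :
    ((Y⟦k⟧ : CochainComplex A ℤ)).cycles n ≅ Y.cycles (n + k) := by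
  have e1 : ((Y⟦k⟧ : CochainComplex A ℤ)).X n = Y.X (n + k) := rfl
  have hd1 : ((Y⟦k⟧ : CochainComplex A ℤ)).iCycles n ≫
      (Y.XIsoOfEq (rfl : n + k = n + k)).hom ≫ Y.d (n + k) (n + k + 1) = 0 := by
    have h2 : (Y.XIsoOfEq (rfl : n + k = n + k)).hom ≫ Y.d (n + k) (n + k + 1) =
        k.negOnePow • (((Y⟦k⟧ : CochainComplex A ℤ)).d n (n + 1) ≫
          (Y.XIsoOfEq (show n + 1 + k = n + k + 1 by omega)).hom) := by
      simp only [CochainComplex.shiftFunctor_obj_d', XIsoOfEq_rfl, Iso.refl_hom, id_comp,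
        d_comp_XIsoOfEq_hom, Linear.units_smul_comp, Linear.comp_units_smul, smul_smul,
        Int.units_mul_self, one_smul]
      erw [Linear.units_smul_comp, smul_smul, Int.units_mul_self, one_smul, d_comp_XIsoOfEq_hom]
    erw [h2, Linear.comp_units_smul, ← assoc, iCycles_d, zero_comp, smul_zero]
  have hd2 : Y.iCycles (n + k) ≫ (Y.XIsoOfEq (rfl : n + k = n + k)).inv ≫
      ((Y⟦k⟧ : CochainComplex A ℤ)).d n (n + 1) = 0 := by
    have h2 : (Y.XIsoOfEq (rfl : n + k = n + k)).inv ≫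
        ((Y⟦k⟧ : CochainComplex A ℤ)).d n (n + 1) =
        k.negOnePow • (Y.d (n + k) (n + k + 1) ≫
          (Y.XIsoOfEq (show n + k + 1 = n + 1 + k by omega)).hom) := by
      simp only [CochainComplex.shiftFunctor_obj_d', XIsoOfEq_rfl, Iso.refl_inv, id_comp,
        d_comp_XIsoOfEq_hom, Linear.units_smul_comp, Linear.comp_units_smul]
      exact id_comp _
    erw [h2, Linear.comp_units_smul, ← assoc, iCycles_d, zero_comp, smul_zero]
  refine
    { hom := Y.liftCycles (((Y⟦k⟧ : CochainComplex A ℤ)).iCycles n ≫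
        (Y.XIsoOfEq (rfl : n + k = n + k)).hom) (n + k + 1)
        ((ComplexShape.up ℤ).next_eq' (by simp)) (by erw [assoc]; exact hd1)
      inv := ((Y⟦k⟧ : CochainComplex A ℤ)).liftCycles (Y.iCycles (n + k) ≫
        (Y.XIsoOfEq (rfl : n + k = n + k)).inv) (n + 1)
        ((ComplexShape.up ℤ).next_eq' (by simp)) (by erw [assoc]; exact hd2)
      hom_inv_id := ?_
      inv_hom_id := ?_ }
  · rw [← cancel_mono (((Y⟦k⟧ : CochainComplex A ℤ)).iCycles n)]
    simp only [assoc, liftCycles_i, id_comp]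
    erw [← assoc, liftCycles_i, assoc, Iso.hom_inv_id, comp_id]
  · rw [← cancel_mono (Y.iCycles (n + k))]
    simp only [assoc, liftCycles_i, id_comp]
    erw [← assoc, liftCycles_i, assoc, Iso.inv_hom_id, comp_id]

end ComplexHelpers

section Twist

variable {A : Type*} [Category A] [Abelian A]

open CochainComplex.HomComplex

variable (X W : CochainComplex A ℤ) (ψ : Cocycle X W 1)

/-- The "twisted" extension complex `X ⊞ W` with differential twisted by a `1`-cocycle. -/
@[simps]
noncomputable def twistE : CochainComplex A ℤ where
  X n := X.X n ⊞ W.X n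
  d i j :=
    if h : i + 1 = j then
      biprod.desc (X.d i j ≫ biprod.inl + (ψ : Cochain X W 1).v i j h ≫ biprod.inr)
        (W.d i j ≫ biprod.inr)
    else 0
  shape i j h := dif_neg h
  d_comp_d' i j l hij hjl := by
    have hij' : i + 1 = j := hij
    have hjl' : j + 1 = l := hjl
    have hδ : (ψ : Cochain X W 1).v i j hij' ≫ W.d j l +
        X.d i j ≫ (ψ : Cochain X W 1).v j l hjl' = 0 := by
      have h0 : (δ 1 2 (ψ : Cochain X W 1)).v i l (by omega) = 0 := by
        rw [ψ.δ_eq_zero]; rfl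
      rw [δ_v 1 2 rfl (ψ : Cochain X W 1) i l (by omega) j j (by omega) hij'] at h0
      simpa [Int.negOnePow_even 2 ⟨1, by norm_num⟩] using h0
    rw [dif_pos hij', dif_pos hjl']
    apply biprod.hom_ext'
    · simp only [biprod.inl_desc_assoc, Preadditive.add_comp, assoc, biprod.inl_desc,
        biprod.inr_desc, comp_zero, Preadditive.comp_add, zero_comp, comp_zero,
        HomologicalComplex.d_comp_d_assoc, zero_add]
      rw [← assoc (X.d i j), ← assoc ((ψ : Cochain X W 1).v i j hij') (W.d j l) biprod.inr,
        ← Preadditive.add_comp, add_comm, hδ, zero_comp]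
    · simp [biprod.inr_desc_assoc]

attribute [reducible] twistE

end Twist

section Twist2

variable {A : Type*} [Category A] [Abelian A]

open CochainComplex.HomComplex

variable (X W : CochainComplex A ℤ) (ψ : Cocycle X W 1)

lemma inl_twistE_d (i j : ℤ) (h : i + 1 = j) :
    (biprod.inl : X.X i ⟶ X.X i ⊞ W.X i) ≫ (twistE X W ψ).d i j =
      X.d i j ≫ biprod.inl + (ψ : Cochain X W 1).v i j h ≫ biprod.inr := by
  dsimp only [twistE]
  rw [dif_pos h, biprod.inl_desc]

lemma inr_twistE_d (i j : ℤ) (h : i + 1 = j) :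
    (biprod.inr : W.X i ⟶ X.X i ⊞ W.X i) ≫ (twistE X W ψ).d i j =
      W.d i j ≫ biprod.inr := by
  dsimp only [twistE]
  rw [dif_pos h, biprod.inr_desc]

/-- The inclusion of `W` into the twisted extension. -/
noncomputable def twistInr : W ⟶ twistE X W ψ where
  f n := biprod.inr
  comm' i j hij := by
    have h : i + 1 = j := hij
    exact inr_twistE_d X W ψ i j h

/-- The projection of the twisted extension onto `X`. -/
noncomputable def twistFst : twistE X W ψ ⟶ X where
  f n := biprod.fst
  comm' i j hij := by
    have h : i + 1 = j := hij
    apply biprod.hom_ext'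
    · conv_rhs => erw [← assoc, inl_twistE_d X W ψ i j h]
      simp
    · conv_rhs => erw [← assoc, inr_twistE_d X W ψ i j h]
      simp

lemma twist_w : twistInr X W ψ ≫ twistFst X W ψ = 0 := by
  ext n
  simp [twistInr, twistFst]

lemma twist_shortExact :
    (ShortComplex.mk (twistInr X W ψ) (twistFst X W ψ) (twist_w X W ψ)).ShortExact := by
  apply HomologicalComplex.shortExact_of_degreewise_shortExact
  intro n
  refine ShortComplex.Splitting.shortExact
    { r := biprod.snd
      s := biprod.inl
      f_r := ?_
      s_g := ?_
      id := ?_ }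
  · dsimp [twistInr]; exact biprod.inr_snd
  · dsimp [twistFst]; exact biprod.inl_fst
  · dsimp [twistInr, twistFst]
    exact (add_comm _ _).trans biprod.total

end Twist2

section Main

open CochainComplex.HomComplex HomologicalComplex

/-- Let `(𝒞, 𝒟)` be a cotorsion pair in an abelian category `A`. For a complex
`X` with all components in `𝒞`, `X` belongs to `dg-𝒞̃` (the left `Ext¹`-orthogonal in `Ch(A)`
of the class `𝒟̃` of acyclic complexes with cycle objects in `𝒟`) if and only if every chain
map from `X` to a complex in `𝒟̃` is nullhomotopic. -/
theorem mem_dgC_iff_maps_to_Dtilde_nullHomotopic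
    {A : Type*} [Category A] [Abelian A] (𝒞 𝒟 : Set A)
    (hpair : IsCotorsionPair 𝒞 𝒟)
    (X : CochainComplex A ℤ) (hX : ∀ n, X.X n ∈ 𝒞) :
    (∀ Y : CochainComplex A ℤ,
        (∀ n, Y.ExactAt n) → (∀ n, Y.cycles n ∈ 𝒟) → Ext1Zero X Y) ↔
      (∀ Y : CochainComplex A ℤ,
        (∀ n, Y.ExactAt n) → (∀ n, Y.cycles n ∈ 𝒟) →
          ∀ f : X ⟶ Y, Nonempty (Homotopy f 0)) := by
  constructor
  · -- Ext¹-orthogonality implies null-homotopy of all maps to 𝒟-acyclic complexes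
    intro h Y hY1 hY2 f
    set W : CochainComplex A ℤ := (Y⟦(-1 : ℤ)⟧) with hWdef
    have hW1 : ∀ n, W.ExactAt n := fun n => shift_exactAt Y (-1) n (hY1 _)
    have hW2 : ∀ n, W.cycles n ∈ 𝒟 := fun n =>
      mem_D_of_iso hpair (shiftCyclesIso Y (-1) n).symm (hY2 _)
    set ψ : Cocycle X W 1 := (Cocycle.ofHom f).rightShift (-1) 1 (by omega) with hψdef
    obtain ⟨r, hr⟩ := h W hW1 hW2 (twistInr X W ψ) (twistFst X W ψ)
      (twist_w X W ψ) (twist_shortExact X W ψ)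
    have hrn : ∀ n, (biprod.inr : W.X n ⟶ X.X n ⊞ W.X n) ≫ r.f n = 𝟙 (W.X n) := by
      intro n
      have h5 := congr_arg (fun (φ : W ⟶ W) => φ.f n) hr
      simp [twistInr] at h5
      exact h5
    set u : Cochain X W 0 :=
      Cochain.ofHoms (fun n => (biprod.inl : X.X n ⟶ X.X n ⊞ W.X n) ≫ r.f n) with hudef
    have hu : δ 0 1 u = (ψ : Cochain X W 1) := by
      ext p q hpq
      rw [δ_zero_cochain_v u p q hpq, hudef]
      rw [Cochain.ofHoms_v, Cochain.ofHoms_v]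
      erw [assoc, r.comm p q]
      erw [← assoc (biprod.inl) ((twistE X W ψ).d p q) (r.f q), inl_twistE_d X W ψ p q hpq]
      simp [Preadditive.add_comp, assoc, hrn q]
    have h6 := u.δ_rightUnshift (-1 : ℤ) (by omega) 0 1 (by omega)
    rw [hu] at h6
    have h7 : (ψ : Cochain X W 1) = (Cochain.ofHom f).rightShift (-1) 1 (by omega) := rfl
    rw [h7, Cochain.rightUnshift_rightShift] at h6
    set z : Cochain X Y (-1) := -(u.rightUnshift (-1 : ℤ) (by omega)) with hzdef
    have hz : Cochain.ofHom f = δ (-1) 0 z + Cochain.ofHom (0 : X ⟶ Y) := by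
      rw [Cochain.ofHom_zero, add_zero, hzdef, δ_neg, h6]
      simp [Int.negOnePow_neg, Int.negOnePow_one]
    exact ⟨(Cochain.equivHomotopy f 0).symm ⟨z, hz⟩⟩
  · -- null-homotopy of all maps implies Ext¹-orthogonality
    intro hhom Y hY1 hY2 E i p w hSE
    haveI := hSE.mono_f
    haveI := hSE.epi_g
    -- the short exact sequence is degreewise short exact
    have hdeg : ∀ n, (((ShortComplex.mk i p w)).map
        (HomologicalComplex.eval A (ComplexShape.up ℤ) n)).ShortExact := fun n =>
      hSE.map_of_exact (HomologicalComplex.eval A (ComplexShape.up ℤ) n)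
    -- degreewise splittings
    have hsplit : ∀ n, ∃ rn : E.X n ⟶ Y.X n, i.f n ≫ rn = 𝟙 (Y.X n) := by
      intro n
      have hYn : Y.X n ∈ 𝒟 := X_mem_D hpair Y hY1 hY2 n
      have hEZ : Ext1Zero (X.X n) (Y.X n) := (hpair.1 (X.X n)).1 (hX n) _ hYn
      exact hEZ (i.f n) (p.f n)
        ((ShortComplex.mk i p w).map (HomologicalComplex.eval A (ComplexShape.up ℤ) n)).zero
        (hdeg n)
    choose rf hrf using hsplit
    set r0 : Cochain E Y 0 := Cochain.ofHoms rf with hr0def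
    have hepi : ∀ n, Epi (p.f n) := fun n => (hdeg n).epi_g
    -- the obstruction cocycle
    have hir0 : ∀ (n q : ℤ) (h : n + 1 = q), i.f n ≫ (δ 0 1 r0).v n q h = 0 := by
      intro n q h
      rw [δ_zero_cochain_v r0 n q h, hr0def, Cochain.ofHoms_v, Cochain.ofHoms_v,
        Preadditive.comp_sub, ← assoc, hrf n, ← assoc, i.comm n q, assoc, hrf q]
      simp
    set ψ : Cochain X Y 1 := Cochain.mk (fun n q h =>
      (CokernelCofork.IsColimit.desc' (hdeg n).gIsCokernel
        ((δ 0 1 r0).v n q h) (hir0 n q h)).1) with hψdef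
    have hψfac : ∀ (n q : ℤ) (h : n + 1 = q),
        p.f n ≫ ψ.v n q h = (δ 0 1 r0).v n q h := by
      intro n q h
      erw [hψdef, Cochain.mk_v]
      exact (CokernelCofork.IsColimit.desc' (hdeg n).gIsCokernel
        ((δ 0 1 r0).v n q h) (hir0 n q h)).2
    have hδψ : δ 1 2 ψ = 0 := by
      ext n q hpq
      haveI := hepi n
      rw [Cochain.zero_v, ← cancel_epi (p.f n), comp_zero]
      rw [δ_v 1 2 rfl ψ n q hpq (n + 1) (n + 1) (by omega) rfl]
      rw [Preadditive.comp_add, ← assoc, hψfac n (n + 1) rfl]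
      rw [Linear.comp_units_smul, ← assoc, p.comm n (n + 1), assoc,
        hψfac (n + 1) q (by omega)]
      have h8 := Cochain.congr_v (δ_δ 0 1 2 r0) n q hpq
      rw [δ_v 1 2 rfl (δ 0 1 r0) n q hpq (n + 1) (n + 1) (by omega) rfl,
        Cochain.zero_v] at h8
      simpa using h8
    -- turn the obstruction into a chain map to the shift `Y⟦1⟧`
    set W : CochainComplex A ℤ := (Y⟦(1 : ℤ)⟧) with hWdef
    have hW1 : ∀ n, W.ExactAt n := fun n => shift_exactAt Y 1 n (hY1 _)
    have hW2 : ∀ n, W.cycles n ∈ 𝒟 := fun n =>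
      mem_D_of_iso hpair (shiftCyclesIso Y 1 n).symm (hY2 _)
    set ψc : Cocycle X Y 1 := Cocycle.mk ψ 2 rfl hδψ with hψcdef
    set g : X ⟶ W := Cocycle.homOf (ψc.rightShift 1 0 (by omega)) with hgdef
    obtain ⟨ht⟩ := hhom W hW1 hW2 g
    obtain ⟨z, hz⟩ := Cochain.equivHomotopy g 0 ht
    rw [Cochain.ofHom_zero, add_zero] at hz
    have hz' : δ (-1) 0 z = ψ.rightShift 1 0 (by omega) := by
      rw [← hz, hgdef]
      rw [Cocycle.cochain_ofHom_homOf_eq_coe]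
      rfl
    have hδh0 := z.δ_rightUnshift 0 (by omega) 1 0 (by omega)
    rw [hz', Cochain.rightUnshift_rightShift] at hδh0
    have hδh : δ 0 1 (-(z.rightUnshift 0 (by omega))) = ψ := by
      rw [δ_neg, hδh0]
      simp [Int.negOnePow_one]
    -- the corrected retraction
    set rc : Cochain E Y 0 :=
      r0 - (Cochain.ofHom p).comp (-(z.rightUnshift 0 (by omega))) (zero_add 0) with hrcdef
    have hpψ : (Cochain.ofHom p).comp ψ (zero_add 1) = δ 0 1 r0 := by
      ext n q hpq
      rw [Cochain.zero_cochain_comp_v, Cochain.ofHom_v]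
      exact hψfac n q hpq
    have hδrc : δ 0 1 rc = 0 := by
      rw [hrcdef, δ_sub, δ_ofHom_comp, hδh, hpψ, sub_self]
    refine ⟨Cocycle.homOf (Cocycle.mk rc 1 (zero_add 1) hδrc), ?_⟩
    ext n
    rw [HomologicalComplex.comp_f, Cocycle.homOf_f, Cocycle.mk_coe, hrcdef]
    have hw : i.f n ≫ p.f n = 0 := by
      have := congr_arg (fun (φ : Y ⟶ X) => φ.f n) w
      simpa using this
    rw [Cochain.sub_v, Cochain.zero_cochain_comp_v, Cochain.ofHom_v, hr0def,
      Cochain.ofHoms_v, Preadditive.comp_sub, ← assoc, hrf n, hw]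
    simp


end Main
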